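/- Let y ∈ ℝ^m, let k ≥ 1, and let f ∈ C^∞(ℝ^m,ℝ). Then f belongs to the k-th power (𝔪_y)^k of the maximal ideal 𝔪_y if and only if the (k−1)-jet of f at y vanishes, i.e., D^j f(y) = 0 for all 0 ≤ j ≤ k−1, where D^j f denotes the j-th iterated Fréchet derivative. -/

import Mathlib

/-!
One inclusion is the Leibniz rule: the jet of a product of functions vanishing to orders `a`
and `b` vanishes to order `a + b`. For the other, Hadamard's lemma writes a function `f` with
`f y = 0` as `f x = ∑ i, (x i - y i) * g i x`, where
`g i x = ∫ t in 0..1, ∂ᵢf (y + t • (x - y))`. Differentiating under the integral shows that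
the `g i` are smooth and vanish to one order less than `f`, so induction on the order applies.
-/

open scoped Manifold
open Module

noncomputable section

/-- The ℝ-algebra of smooth real-valued functions on `ℝ^m`. -/
abbrev SmoothFnsE (m : ℕ) : Type _ :=
  C^(⊤ : ℕ∞)⟮𝓡 m, EuclideanSpace ℝ (Fin m); 𝓘(ℝ, ℝ), ℝ⟯

variable {m : ℕ}

/-- The ideal `𝔪ₓ` of smooth functions on `ℝ^m` vanishing at the point `x`. -/
def mIdealE (x : EuclideanSpace ℝ (Fin m)) : Ideal (SmoothFnsE m) where
  carrier := {f | f x = 0}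
  add_mem' := by intro f g hf hg; simp_all
  zero_mem' := by simp
  smul_mem' := by intro c f hf; simp_all

open scoped ContDiff

section Jet

variable {E F G : Type*} [NormedAddCommGroup E] [NormedSpace ℝ E] [NormedAddCommGroup F]
  [NormedSpace ℝ F] [NormedAddCommGroup G] [NormedSpace ℝ G]

theorem iteratedFDeriv_zero_eq_zero_iff {f : E → F} {x : E} :
    iteratedFDeriv ℝ 0 f x = 0 ↔ f x = 0 := by
  rw [← norm_eq_zero, norm_iteratedFDeriv_zero, norm_eq_zero]

theorem iteratedFDeriv_succ_eq_zero_iff {f : E → F} {x : E} {n : ℕ} :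
    iteratedFDeriv ℝ (n + 1) f x = 0 ↔ iteratedFDeriv ℝ n (fderiv ℝ f) x = 0 := by
  rw [← norm_eq_zero, ← norm_iteratedFDeriv_fderiv, norm_eq_zero]

theorem forall_lt_succ_iteratedFDeriv_eq_zero_iff {f : E → F} {x : E} {k : ℕ} :
    (∀ j < k + 1, iteratedFDeriv ℝ j f x = 0) ↔
      f x = 0 ∧ ∀ j < k, iteratedFDeriv ℝ j (fderiv ℝ f) x = 0 := by
  simp only [Nat.forall_lt_succ_left, iteratedFDeriv_zero_eq_zero_iff,
    iteratedFDeriv_succ_eq_zero_iff]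

theorem ContinuousLinearMap.iteratedFDeriv_comp_left_eq_zero (L : F →L[ℝ] G) {f : E → F}
    {x : E} {j : ℕ} (hf : ContDiffAt ℝ j f x) (h : iteratedFDeriv ℝ j f x = 0) :
    iteratedFDeriv ℝ j (L ∘ f) x = 0 := by
  rw [L.iteratedFDeriv_comp_left hf le_rfl, h]
  ext
  simp

theorem iteratedFDeriv_mul_eq_zero {A : Type*} [NormedRing A] [NormedAlgebra ℝ A] {f g : E → A}
    {x : E} {a b : ℕ} (hf : ContDiff ℝ ∞ f) (hg : ContDiff ℝ ∞ g)
    (hfa : ∀ i < a, iteratedFDeriv ℝ i f x = 0)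
    (hgb : ∀ i < b, iteratedFDeriv ℝ i g x = 0) :
    ∀ j < a + b, iteratedFDeriv ℝ j (fun z => f z * g z) x = 0 := by
  intro j hj
  rw [← norm_le_zero_iff]
  refine (norm_iteratedFDeriv_mul_le hf hg x (mod_cast le_top)).trans_eq
    (Finset.sum_eq_zero fun i hi => ?_)
  have hij : i ≤ j := Nat.lt_succ_iff.mp (Finset.mem_range.mp hi)
  rcases lt_or_ge i a with hia | hia
  · simp [hfa i hia]
  · simp [hgb (j - i) (by omega)]

end Jet

universe u

section SegmentIntegral

variable {E F : Type u} [NormedAddCommGroup E] [NormedSpace ℝ E] [NormedAddCommGroup F]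
  [NormedSpace ℝ F]

/-- The weight `c` absorbs the factor `t` produced by each differentiation in `x`, so that these
integrals are closed under `fderiv`. -/
def weightedSegmentIntegral (c : ℝ → ℝ) (φ : E → F) (y x : E) : F :=
  ∫ t in (0 : ℝ)..1, c t • φ (y + t • (x - y))

theorem hasFDerivAt_smul_comp_segment {φ : E → F} {y x : E} {t : ℝ}
    (hφ : DifferentiableAt ℝ φ (y + t • (x - y))) (a : ℝ) :
    HasFDerivAt (fun x => a • φ (y + t • (x - y)))
      ((a * t) • fderiv ℝ φ (y + t • (x - y))) x := by
  have hline : HasFDerivAt (fun x => y + t • (x - y)) (t • ContinuousLinearMap.id ℝ E) x := by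
    simpa using (((hasFDerivAt_id x).sub_const y).const_smul t).const_add y
  refine ((hφ.hasFDerivAt.comp x hline).const_smul a).congr_fderiv ?_
  rw [ContinuousLinearMap.comp_smul, ContinuousLinearMap.comp_id, smul_smul]

theorem eq_add_weightedSegmentIntegral_fderiv_apply [CompleteSpace F] {f : E → F}
    (hf : ContDiff ℝ 1 f) (y x : E) :
    f x = f y + weightedSegmentIntegral (fun _ => 1) (fderiv ℝ f) y x (x - y) := by
  have hDf : Continuous (fderiv ℝ f) := hf.continuous_fderiv one_ne_zero
  have hint : Continuous fun t : ℝ => (1 : ℝ) • fderiv ℝ f (y + t • (x - y)) := by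
    fun_prop
  rw [weightedSegmentIntegral,
    ContinuousLinearMap.intervalIntegral_apply (hint.intervalIntegrable 0 1)]
  simpa using map_add_eq_sum_add_integral_iteratedFDeriv (n := 0) (x := y) (y := x - y)
    fun t _ => hf.contDiffAt

variable [ProperSpace E]

theorem hasFDerivAt_weightedSegmentIntegral {c : ℝ → ℝ} {φ : E → F} (hc : Continuous c)
    (hφ : ContDiff ℝ 1 φ) (y x₀ : E) :
    HasFDerivAt (weightedSegmentIntegral c φ y)
      (weightedSegmentIntegral (fun t => c t * t) (fderiv ℝ φ) y x₀) x₀ := by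
  have hφc : Continuous φ := hφ.continuous
  have hDφ : Continuous (fderiv ℝ φ) := hφ.continuous_fderiv one_ne_zero
  have hint (x : E) : Continuous fun t : ℝ => c t • φ (y + t • (x - y)) := by fun_prop
  set F' : E → ℝ → E →L[ℝ] F := fun x t => (c t * t) • fderiv ℝ φ (y + t • (x - y))
  have hF' : Continuous fun p : ℝ × E => F' p.2 p.1 := by fun_prop
  obtain ⟨C, hC⟩ :=
    (isCompact_Icc.prod (isCompact_closedBall x₀ 1)).exists_bound_of_continuousOn hF'.continuousOn
  apply intervalIntegral.hasFDerivAt_integral_of_dominated_of_fderiv_le (F' := F')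
    (bound := fun _ => C) (Metric.ball_mem_nhds x₀ one_pos)
  · exact .of_forall fun x => (hint x).aestronglyMeasurable
  · exact (hint x₀).intervalIntegrable _ _
  · exact (hF'.comp (by fun_prop : Continuous fun t : ℝ => (t, x₀))).aestronglyMeasurable
  · refine .of_forall fun t ht x hx => hC (t, x) ⟨?_, Metric.ball_subset_closedBall hx⟩
    rw [Set.uIoc_of_le zero_le_one] at ht
    exact Set.Ioc_subset_Icc_self ht
  · exact intervalIntegrable_const
  · exact .of_forall fun t _ x _ =>
      hasFDerivAt_smul_comp_segment ((hφ.differentiable one_ne_zero) _) (c t)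

theorem differentiable_weightedSegmentIntegral {c : ℝ → ℝ} {φ : E → F} (hc : Continuous c)
    (hφ : ContDiff ℝ 1 φ) (y : E) : Differentiable ℝ (weightedSegmentIntegral c φ y) :=
  fun x => (hasFDerivAt_weightedSegmentIntegral hc hφ y x).differentiableAt

theorem fderiv_weightedSegmentIntegral {c : ℝ → ℝ} {φ : E → F} (hc : Continuous c)
    (hφ : ContDiff ℝ 1 φ) (y : E) :
    fderiv ℝ (weightedSegmentIntegral c φ y) =
      weightedSegmentIntegral (fun t => c t * t) (fderiv ℝ φ) y :=
  funext fun x => (hasFDerivAt_weightedSegmentIntegral hc hφ y x).fderiv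

theorem contDiff_weightedSegmentIntegral {c : ℝ → ℝ} {φ : E → F} (hc : Continuous c)
    (hφ : ContDiff ℝ ∞ φ) (y : E) : ContDiff ℝ ∞ (weightedSegmentIntegral c φ y) := by
  have hφ1 : ContDiff ℝ 1 φ := hφ.of_le (mod_cast le_top)
  refine contDiff_infty.mpr fun n => ?_
  induction n generalizing c F with
  | zero => exact contDiff_zero.mpr (differentiable_weightedSegmentIntegral hc hφ1 y).continuous
  | succ n ih =>
    have hDφ : ContDiff ℝ ∞ (fderiv ℝ φ) := (contDiff_infty_iff_fderiv.mp hφ).2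
    rw [Nat.cast_succ, contDiff_succ_iff_fderiv, fderiv_weightedSegmentIntegral hc hφ1]
    exact ⟨differentiable_weightedSegmentIntegral hc hφ1 y, by simp,
      ih (by fun_prop) hDφ (hDφ.of_le (mod_cast le_top))⟩

theorem iteratedFDeriv_weightedSegmentIntegral_eq_zero {c : ℝ → ℝ} {φ : E → F}
    (hc : Continuous c) (hφ : ContDiff ℝ ∞ φ) {y : E} {k : ℕ}
    (hφk : ∀ j < k, iteratedFDeriv ℝ j φ y = 0) :
    ∀ j < k, iteratedFDeriv ℝ j (weightedSegmentIntegral c φ y) y = 0 := by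
  induction k generalizing c F with
  | zero => simp
  | succ k ih =>
    rw [forall_lt_succ_iteratedFDeriv_eq_zero_iff] at hφk ⊢
    refine ⟨by simp [weightedSegmentIntegral, hφk.1], ?_⟩
    rw [fderiv_weightedSegmentIntegral hc (hφ.of_le (mod_cast le_top))]
    exact ih (by fun_prop) (contDiff_infty_iff_fderiv.mp hφ).2 hφk.2

end SegmentIntegral

namespace SmoothFnsE

theorem contDiff (f : SmoothFnsE m) : ContDiff ℝ ∞ f :=
  contMDiff_iff_contDiff.mp f.contMDiff

def ofContDiff (f : EuclideanSpace ℝ (Fin m) → ℝ) (hf : ContDiff ℝ ∞ f) : SmoothFnsE m :=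
  ⟨f, contMDiff_iff_contDiff.mpr hf⟩

@[simp]
theorem coe_ofContDiff (f : EuclideanSpace ℝ (Fin m) → ℝ) (hf : ContDiff ℝ ∞ f) :
    ⇑(ofContDiff f hf) = f :=
  rfl

theorem sum_apply {ι : Type*} (s : Finset ι) (f : ι → SmoothFnsE m)
    (x : EuclideanSpace ℝ (Fin m)) : (∑ i ∈ s, f i) x = ∑ i ∈ s, f i x :=
  map_sum (ContMDiffMap.evalRingHom x) f s

end SmoothFnsE

def vanishingJetIdeal (y : EuclideanSpace ℝ (Fin m)) (k : ℕ) : Ideal (SmoothFnsE m) where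
  carrier := {f | ∀ j < k, iteratedFDeriv ℝ j (f : EuclideanSpace ℝ (Fin m) → ℝ) y = 0}
  add_mem' {f g} hf hg j hj := by
    rw [ContMDiffMap.coe_add, iteratedFDeriv_add_apply
      (f.contDiff.contDiffAt.of_le (mod_cast le_top))
      (g.contDiff.contDiffAt.of_le (mod_cast le_top)), hf j hj, hg j hj, add_zero]
  zero_mem' j _ := by simp
  smul_mem' c f hf j hj :=
    iteratedFDeriv_mul_eq_zero c.contDiff f.contDiff (a := 0) (by simp) hf j (by rwa [zero_add])

theorem mem_vanishingJetIdeal {y : EuclideanSpace ℝ (Fin m)} {k : ℕ} {f : SmoothFnsE m} :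
    f ∈ vanishingJetIdeal y k ↔
      ∀ j < k, iteratedFDeriv ℝ j (f : EuclideanSpace ℝ (Fin m) → ℝ) y = 0 :=
  Iff.rfl

theorem vanishingJetIdeal_zero (y : EuclideanSpace ℝ (Fin m)) : vanishingJetIdeal y 0 = ⊤ :=
  eq_top_iff.mpr fun f _ => by simp [mem_vanishingJetIdeal]

theorem vanishingJetIdeal_one (y : EuclideanSpace ℝ (Fin m)) :
    vanishingJetIdeal y 1 = mIdealE y := by
  ext f
  simp only [mem_vanishingJetIdeal, Nat.lt_one_iff, forall_eq, iteratedFDeriv_zero_eq_zero_iff]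
  rfl

theorem vanishingJetIdeal_mul_le (y : EuclideanSpace ℝ (Fin m)) (a b : ℕ) :
    vanishingJetIdeal y a * vanishingJetIdeal y b ≤ vanishingJetIdeal y (a + b) :=
  Ideal.mul_le.mpr fun f hf g hg => iteratedFDeriv_mul_eq_zero f.contDiff g.contDiff hf hg

theorem vanishingJetIdeal_succ_le (y : EuclideanSpace ℝ (Fin m)) (k : ℕ) :
    vanishingJetIdeal y (k + 1) ≤ mIdealE y * vanishingJetIdeal y k := by
  intro f hf
  obtain ⟨hfy, hDf⟩ := forall_lt_succ_iteratedFDeriv_eq_zero_iff.mp hf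
  have hDf_smooth : ContDiff ℝ ∞ (fderiv ℝ f) := (contDiff_infty_iff_fderiv.mp f.contDiff).2
  set g := weightedSegmentIntegral (fun _ => 1) (fderiv ℝ f) y
  have hg : ContDiff ℝ ∞ g := contDiff_weightedSegmentIntegral continuous_const hDf_smooth y
  have hgk : ∀ j < k, iteratedFDeriv ℝ j g y = 0 :=
    iteratedFDeriv_weightedSegmentIntegral_eq_zero continuous_const hDf_smooth hDf
  let coord (i : Fin m) : SmoothFnsE m := .ofContDiff (fun x => x i - y i) (by fun_prop)
  let quot (i : Fin m) : SmoothFnsE m :=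
    .ofContDiff (fun x => g x (EuclideanSpace.single i 1)) (hg.clm_apply contDiff_const)
  have hf_eq : f = ∑ i, coord i * quot i := by
    ext x
    rw [SmoothFnsE.sum_apply, eq_add_weightedSegmentIntegral_fderiv_apply
      (f.contDiff.of_le (mod_cast le_top)) y x, hfy, zero_add]
    conv_lhs => rw [← (EuclideanSpace.basisFun (Fin m) ℝ).sum_repr (x - y)]
    simp [coord, quot, g]
  rw [hf_eq]
  refine Ideal.sum_mem _ fun i _ => Ideal.mul_mem_mul (sub_self (y i)) fun j hj => ?_
  exact (ContinuousLinearMap.apply ℝ ℝ _).iteratedFDeriv_comp_left_eq_zero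
    (hg.contDiffAt.of_le (mod_cast le_top)) (hgk j hj)

theorem mIdealE_pow (y : EuclideanSpace ℝ (Fin m)) (k : ℕ) :
    mIdealE y ^ k = vanishingJetIdeal y k := by
  induction k with
  | zero => rw [pow_zero, Ideal.one_eq_top, vanishingJetIdeal_zero]
  | succ k ih =>
    refine le_antisymm ?_ ?_
    · rw [pow_succ, ih, ← vanishingJetIdeal_one]
      exact vanishingJetIdeal_mul_le y k 1
    · rw [pow_succ', ih]
      exact vanishingJetIdeal_succ_le y k

theorem mem_pow_mIdeal_iff_jet_vanishes
    (m : ℕ) (y : EuclideanSpace ℝ (Fin m)) (k : ℕ) (f : SmoothFnsE m) :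
    f ∈ (mIdealE y) ^ k ↔
      ∀ j < k, iteratedFDeriv ℝ j (f : EuclideanSpace ℝ (Fin m) → ℝ) y = 0 := by
  rw [mIdealE_pow, mem_vanishingJetIdeal]
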